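/- With schools sorted by competitiveness ratios γ_c/q_c, the vector p̂ = [A^{−1}(q − γ/Γ)]^+ (entrywise positive part) is the unique equilibrium of the single-score MNL market: it satisfies A p̂ + γ/Γ ≤ q componentwise, and (A p̂ + γ/Γ)_c = q_c whenever p̂_c > 0. -/

import Mathlib

/-!
`Bmat γ` inverts the upper triangular `Amat γ`, so `f = Bmat γ *ᵥ (q - γ/Γ)` fills every school
exactly, and `f c = 1 - ∑ k, γ k * (q / γ) (max k c)`. As `q / γ` decreases along the sorted
order, `f` is monotone: its positive part `p̂` vanishes up to some school `d` and equals `f` after.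
Row `c` of an upper triangular system only sees the entries `≥ c`, so demand is exact wherever
`f c > 0`, and at `d` it falls short of `q d` by `γ d / (∑ k ≤ d, γ k) * (-f d) ≥ 0`. On rows
`c ≤ d` the demand at `p̂` is proportional to `γ c`, and the ratio ordering carries the bound from
`d` down to `c`. Conversely an equilibrium `p` equals `f` on its support (a final segment, by
monotonicity), and feasibility at its last zero `d` forces `f d ≤ 0`, hence `p = p̂`.
-/

open Finset

/-- The upper triangular demand matrix `A`. -/
noncomputable def Amat {n : ℕ} (γ : Fin n → ℝ) : Matrix (Fin n) (Fin n) ℝ :=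
  Matrix.of fun i j =>
    if i = j then -γ i / ∑ k ∈ Iic i, γ k
    else if i < j then γ i * (1 / ∑ k ∈ Iio j, γ k - 1 / ∑ k ∈ Iic j, γ k)
    else 0

/-- The explicit inverse `A⁻¹`. -/
noncomputable def Bmat {n : ℕ} (γ : Fin n → ℝ) : Matrix (Fin n) (Fin n) ℝ :=
  Matrix.of fun i j =>
    if i = j then -(∑ k ∈ Iic i, γ k) / γ i
    else if i < j then -1
    else 0

open Matrix

theorem Finset.sum_Iic_add_sum_Ioi {α M : Type*} [Fintype α] [LinearOrder α]
    [LocallyFiniteOrderBot α] [LocallyFiniteOrderTop α]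
    [AddCommMonoid M] (f : α → M) (c : α) :
    ∑ k ∈ Iic c, f k + ∑ k ∈ Ioi c, f k = ∑ k, f k := by
  rw [← sum_union (disjoint_left.2 fun k hk hk' => (mem_Iic.1 hk).not_gt (mem_Ioi.1 hk'))]
  exact sum_congr (by ext k; simp [le_or_gt]) fun _ _ => rfl

namespace Matrix.IsUpperTriangular

variable {m R : Type*} [Fintype m] [LinearOrder m]

theorem mul_apply_self [NonUnitalNonAssocSemiring R] {M N : Matrix m m R} (hM : M.IsUpperTriangular) (hN : N.IsUpperTriangular) (i : m) :
    (M * N) i i = M i i * N i i := by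
  rw [mul_apply]
  refine Fintype.sum_eq_single i fun k hk => ?_
  rcases hk.lt_or_gt with hlt | hgt
  · rw [hM hlt, zero_mul]
  · rw [hN hgt, mul_zero]

variable [NonUnitalNonAssocRing R] {M : Matrix m m R}

theorem mulVec_apply_sub_of_eqOn_Ioi (hM : M.IsUpperTriangular) {x y : m → R} {c : m}
    (h : ∀ j, c < j → x j = y j) : (M *ᵥ x) c - (M *ᵥ y) c = M c c * (x c - y c) := by
  rw [← Pi.sub_apply, ← mulVec_sub, mulVec, dotProduct]
  refine Fintype.sum_eq_single c fun j hj => ?_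
  rcases hj.lt_or_gt with hlt | hgt
  · rw [hM hlt, zero_mul]
  · rw [Pi.sub_apply, h j hgt, sub_self, mul_zero]

theorem mulVec_apply_eq_of_eqOn_Ici (hM : M.IsUpperTriangular) {x y : m → R} {c : m}
    (h : ∀ j, c ≤ j → x j = y j) : (M *ᵥ x) c = (M *ᵥ y) c := by
  rw [← sub_eq_zero, hM.mulVec_apply_sub_of_eqOn_Ioi fun j hj => h j hj.le, h c le_rfl,
    sub_self, mul_zero]

end Matrix.IsUpperTriangular

variable {n : ℕ} {γ : Fin n → ℝ}

theorem Amat_isUpperTriangular (γ : Fin n → ℝ) : (Amat γ).IsUpperTriangular :=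
  fun i j (h : j < i) => by simp [Amat, h.ne', h.not_gt]

theorem Bmat_isUpperTriangular (γ : Fin n → ℝ) : (Bmat γ).IsUpperTriangular :=
  fun i j (h : j < i) => by simp [Bmat, h.ne', h.not_gt]

theorem Amat_apply_self (γ : Fin n → ℝ) (i : Fin n) :
    Amat γ i i = -γ i / ∑ k ∈ Iic i, γ k := by
  simp [Amat]

theorem Amat_apply_of_lt {i j : Fin n} (h : i < j) :
    Amat γ i j = γ i * (1 / ∑ k ∈ Iio j, γ k - 1 / ∑ k ∈ Iic j, γ k) := by
  simp [Amat, h, h.ne]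

theorem Bmat_apply_self (γ : Fin n → ℝ) (i : Fin n) :
    Bmat γ i i = -(∑ k ∈ Iic i, γ k) / γ i := by
  simp [Bmat]

theorem Bmat_apply_of_lt {i j : Fin n} (h : i < j) : Bmat γ i j = -1 := by
  simp [Bmat, h, h.ne]

theorem sum_Iic_pos (hγ : ∀ i, 0 < γ i) (c : Fin n) : 0 < ∑ k ∈ Iic c, γ k :=
  sum_pos (fun k _ => hγ k) ⟨c, mem_Iic.2 le_rfl⟩

theorem sum_Iio_Bmat_mul {i j : Fin n} (hγ : ∀ i, 0 < γ i) (hij : i < j) :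
    ∑ k ∈ Iio j, Bmat γ i k * γ k = -∑ k ∈ Iio j, γ k := by
  have hlow : (Iio j).filter (· ≤ i) = Iic i := by
    ext k
    simpa using fun hk : k ≤ i => hk.trans_lt hij
  have hdiag : ∑ k ∈ Iic i, Bmat γ i k * γ k = -∑ k ∈ Iic i, γ k := by
    rw [sum_eq_single_of_mem i (mem_Iic.2 le_rfl) fun k hk hki => by
      rw [Bmat_isUpperTriangular γ ((mem_Iic.1 hk).lt_of_ne hki), zero_mul], Bmat_apply_self]
    field_simp [(hγ i).ne']
  have habove : ∑ k ∈ (Iio j).filter (¬ · ≤ i), Bmat γ i k * γ k =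
      -∑ k ∈ (Iio j).filter (¬ · ≤ i), γ k := by
    rw [← sum_neg_distrib]
    exact sum_congr rfl fun k hk => by
      rw [Bmat_apply_of_lt (not_le.1 (mem_filter.1 hk).2), neg_one_mul]
  rw [← sum_filter_add_sum_filter_not (Iio j) (· ≤ i), hlow,
    ← sum_filter_add_sum_filter_not (Iio j) (· ≤ i) γ, hlow, hdiag, habove, neg_add]

theorem Bmat_mul_Amat (hγ : ∀ i, 0 < γ i) : Bmat γ * Amat γ = 1 := by
  ext i j
  rcases lt_trichotomy i j with hij | rfl | hij
  · have hAj : ∀ k ∈ Iio j, Bmat γ i k * Amat γ k j =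
        Bmat γ i k * γ k * (1 / ∑ k ∈ Iio j, γ k - 1 / ∑ k ∈ Iic j, γ k) :=
      fun k hk => by rw [Amat_apply_of_lt (mem_Iio.1 hk), mul_assoc]
    have hpos : 0 < ∑ k ∈ Iio j, γ k := sum_pos (fun k _ => hγ k) ⟨i, mem_Iio.2 hij⟩
    have hsplit : ∑ k ∈ Iic j, γ k = γ j + ∑ k ∈ Iio j, γ k := by
      rw [← Iio_insert, sum_insert notMem_Iio_self]
    rw [mul_apply, one_apply_ne hij.ne, ← sum_subset (subset_univ (Iic j)) fun k _ hk =>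
        by rw [Amat_isUpperTriangular γ (not_le.1 (mt mem_Iic.2 hk)), mul_zero],
      ← Iio_insert, sum_insert notMem_Iio_self, sum_congr rfl hAj, ← sum_mul,
      sum_Iio_Bmat_mul hγ hij, Bmat_apply_of_lt hij, Amat_apply_self, hsplit]
    -- the entry is `γ j / S j - S' j * (1 / S' j - 1 / S j)`, where `S' j = ∑ k < j, γ k`
    -- and `S j = γ j + S' j`
    field_simp [hpos.ne', (add_pos (hγ j) hpos).ne']
    ring
  · rw [(Bmat_isUpperTriangular γ).mul_apply_self (Amat_isUpperTriangular γ),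
      Bmat_apply_self, Amat_apply_self, one_apply_eq]
    field_simp [(hγ i).ne', (sum_Iic_pos hγ i).ne']
  · rw [(Bmat_isUpperTriangular γ).mul (Amat_isUpperTriangular γ) hij, one_apply_ne hij.ne']

theorem Amat_mul_Bmat (hγ : ∀ i, 0 < γ i) : Amat γ * Bmat γ = 1 :=
  _root_.mul_eq_one_comm.1 (Bmat_mul_Amat hγ)

theorem Bmat_mulVec_apply (hγ : ∀ i, 0 < γ i) (x : Fin n → ℝ) (c : Fin n) :
    (Bmat γ *ᵥ x) c = -∑ k, γ k * (x (max k c) / γ (max k c)) := by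
  rw [mulVec, dotProduct, ← sum_Iic_add_sum_Ioi, ← sum_Iic_add_sum_Ioi, neg_add]
  congr 1
  · rw [sum_eq_single_of_mem c (mem_Iic.2 le_rfl) fun k hk hkc => by
        rw [Bmat_isUpperTriangular γ ((mem_Iic.1 hk).lt_of_ne hkc), zero_mul],
      sum_congr rfl fun k hk => by rw [max_eq_right (mem_Iic.1 hk)], ← sum_mul,
      Bmat_apply_self]
    ring
  · rw [← sum_neg_distrib]
    refine sum_congr rfl fun k hk => ?_
    rw [Bmat_apply_of_lt (mem_Ioi.1 hk), max_eq_left (mem_Ioi.1 hk).le]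
    field_simp [(hγ k).ne']

theorem Amat_mulVec_apply_proportional {x : Fin n → ℝ} {c d : Fin n} (hcd : c ≤ d)
    (hx : ∀ j, j ≤ d → x j = 0) :
    γ d * (Amat γ *ᵥ x) c = γ c * (Amat γ *ᵥ x) d := by
  have key : ∀ e ≤ d, (Amat γ *ᵥ x) e =
      γ e * ∑ j ∈ Ioi d, (1 / ∑ k ∈ Iio j, γ k - 1 / ∑ k ∈ Iic j, γ k) * x j := by
    intro e he
    rw [mulVec, dotProduct, mul_sum, ← sum_subset (subset_univ (Ioi d)) fun j _ hj => by
      rw [hx j (not_lt.1 (mt mem_Ioi.2 hj)), mul_zero]]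
    refine sum_congr rfl fun j hj => ?_
    rw [Amat_apply_of_lt (he.trans_lt (mem_Ioi.1 hj))]
    ring
  rw [key c hcd, key d le_rfl]
  ring

noncomputable def clearingCutoff (γ q : Fin n → ℝ) : Fin n → ℝ :=
  Bmat γ *ᵥ fun c => q c - γ c / ∑ i, γ i

noncomputable def equilibriumCutoff (γ q : Fin n → ℝ) : Fin n → ℝ :=
  fun c => max 0 (clearingCutoff γ q c)

section ClearingCutoff

variable {q : Fin n → ℝ} (hγ : ∀ i, 0 < γ i)
include hγ

theorem Amat_mulVec_clearingCutoff :
    Amat γ *ᵥ clearingCutoff γ q = fun c => q c - γ c / ∑ i, γ i := by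
  rw [clearingCutoff, mulVec_mulVec, Amat_mul_Bmat hγ, one_mulVec]

theorem clearingCutoff_apply (c : Fin n) :
    clearingCutoff γ q c = 1 - ∑ k, γ k * (q (max k c) / γ (max k c)) := by
  have hΓ : ∑ k, γ k ≠ 0 := (sum_pos (fun k _ => hγ k) ⟨c, mem_univ c⟩).ne'
  have hterm : ∀ k, γ k * ((q (max k c) - γ (max k c) / ∑ i, γ i) / γ (max k c)) =
      γ k * (q (max k c) / γ (max k c)) - γ k / ∑ i, γ i := fun k => by
    field_simp [(hγ (max k c)).ne']
  rw [clearingCutoff, Bmat_mulVec_apply hγ, sum_congr rfl fun k _ => hterm k, sum_sub_distrib,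
    ← sum_div, div_self hΓ]
  ring

theorem demand_add_eq_of_eqOn_Ioi {x : Fin n → ℝ} {d : Fin n}
    (h : ∀ j, d < j → x j = clearingCutoff γ q j) :
    (Amat γ *ᵥ x) d + γ d / ∑ i, γ i =
      q d + γ d / (∑ k ∈ Iic d, γ k) * (clearingCutoff γ q d - x d) := by
  have := (Amat_isUpperTriangular γ).mulVec_apply_sub_of_eqOn_Ioi h
  rw [Amat_mulVec_clearingCutoff hγ, Amat_apply_self] at this
  linear_combination this

theorem monotone_clearingCutoff (hr : Antitone (q / γ)) : Monotone (clearingCutoff γ q) := by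
  intro c d hcd
  rw [clearingCutoff_apply hγ, clearingCutoff_apply hγ]
  exact sub_le_sub_left (sum_le_sum fun k _ =>
    mul_le_mul_of_nonneg_left (hr (max_le_max le_rfl hcd)) (hγ k).le) 1

end ClearingCutoff

section Equilibrium

variable {q : Fin n → ℝ} (hγ : ∀ i, 0 < γ i) (hr : Antitone (q / γ))
include hγ hr

theorem demand_add_equilibriumCutoff_eq {c : Fin n} (hc : 0 < clearingCutoff γ q c) :
    (Amat γ *ᵥ equilibriumCutoff γ q) c + γ c / ∑ i, γ i = q c := by
  have hagree : ∀ j, c ≤ j → equilibriumCutoff γ q j = clearingCutoff γ q j := fun j hj =>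
    max_eq_right (hc.trans_le (monotone_clearingCutoff hγ hr hj)).le
  rw [demand_add_eq_of_eqOn_Ioi hγ fun j hj => hagree j hj.le, hagree c le_rfl, sub_self,
    mul_zero, add_zero]

theorem demand_add_equilibriumCutoff_le (c : Fin n) :
    (Amat γ *ᵥ equilibriumCutoff γ q) c + γ c / ∑ i, γ i ≤ q c := by
  rcases lt_or_ge 0 (clearingCutoff γ q c) with hc | hc
  · exact (demand_add_equilibriumCutoff_eq hγ hr hc).le
  obtain ⟨d, hcd, hd⟩ := Finite.exists_le_maximal (p := fun j => clearingCutoff γ q j ≤ 0) hc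
  have hzero : ∀ j ≤ d, equilibriumCutoff γ q j = 0 := fun j hj =>
    max_eq_left ((monotone_clearingCutoff hγ hr hj).trans hd.prop)
  have hpos : ∀ j, d < j → equilibriumCutoff γ q j = clearingCutoff γ q j := fun j hj =>
    max_eq_right (not_le.1 (hd.not_prop_of_gt hj)).le
  have hdemand : (Amat γ *ᵥ equilibriumCutoff γ q) d + γ d / ∑ i, γ i ≤ q d := by
    rw [demand_add_eq_of_eqOn_Ioi hγ hpos, hzero d le_rfl, sub_zero]
    linarith [mul_nonpos_of_nonneg_of_nonpos (div_pos (hγ d) (sum_Iic_pos hγ d)).le hd.prop]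
  have hratio : γ c * q d ≤ γ d * q c := by
    have := (div_le_div_iff₀ (hγ d) (hγ c)).1 (hr hcd)
    linarith
  refine le_of_mul_le_mul_left ?_ (hγ d)
  calc γ d * ((Amat γ *ᵥ equilibriumCutoff γ q) c + γ c / ∑ i, γ i)
      = γ c * ((Amat γ *ᵥ equilibriumCutoff γ q) d + γ d / ∑ i, γ i) := by
        rw [mul_add, Amat_mulVec_apply_proportional hcd hzero]
        ring
    _ ≤ γ c * q d := mul_le_mul_of_nonneg_left hdemand (hγ c).le
    _ ≤ γ d * q c := hratio

theorem eq_equilibriumCutoff {p : Fin n → ℝ} (hp0 : ∀ c, 0 ≤ p c) (hpm : Monotone p)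
    (hle : ∀ c, (Amat γ *ᵥ p) c + γ c / ∑ i, γ i ≤ q c)
    (hcompl : ∀ c, 0 < p c → (Amat γ *ᵥ p) c + γ c / ∑ i, γ i = q c) :
    p = equilibriumCutoff γ q := by
  have hsupp : ∀ c, 0 < p c → p c = clearingCutoff γ q c := fun c hc =>
    calc p c = (Bmat γ *ᵥ (Amat γ *ᵥ p)) c := by
          rw [mulVec_mulVec, Bmat_mul_Amat hγ, one_mulVec]
      _ = clearingCutoff γ q c := (Bmat_isUpperTriangular γ).mulVec_apply_eq_of_eqOn_Ici
          fun j hj => eq_sub_of_add_eq (hcompl j (hc.trans_le (hpm hj)))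
  funext c
  rcases (hp0 c).lt_or_eq with hc | hc
  · rw [equilibriumCutoff, ← hsupp c hc, max_eq_right hc.le]
  obtain ⟨d, hcd, hd⟩ := Finite.exists_le_maximal (p := fun j => p j = 0) hc.symm
  have hpos : ∀ j, d < j → p j = clearingCutoff γ q j := fun j hj =>
    hsupp j ((hp0 j).lt_of_ne (Ne.symm (hd.not_prop_of_gt hj)))
  have hfd : clearingCutoff γ q d ≤ 0 := by
    have hdemand := hle d
    rw [demand_add_eq_of_eqOn_Ioi hγ hpos, hd.prop, sub_zero] at hdemand
    exact le_of_mul_le_mul_left (by linarith) (div_pos (hγ d) (sum_Iic_pos hγ d))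
  rw [equilibriumCutoff, ← hc, max_eq_left ((monotone_clearingCutoff hγ hr hcd).trans hfd)]

end Equilibrium

/-- With schools sorted by competitiveness ratios, `p̂ = [A⁻¹(q - γ/Γ)]⁺` is the
unique equilibrium of the single-score MNL market: demand `A p̂ + γ/Γ` is at
most `q` componentwise, with equality wherever `p̂_c > 0`; and it is the unique
such nonnegative sorted cutoff vector. -/
theorem mnl_equilibrium {n : ℕ} (γ q : Fin n → ℝ)
    (hγ : ∀ i, 0 < γ i) (hq : ∀ i, 0 < q i)
    (hratio : ∀ i j : Fin n, i ≤ j → γ i / q i ≤ γ j / q j) :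
    letI Γ : ℝ := ∑ i, γ i
    letI phat : Fin n → ℝ :=
      fun c => max 0 (((Bmat γ).mulVec fun c => q c - γ c / Γ) c)
    (∀ c, (Amat γ).mulVec phat c + γ c / Γ ≤ q c) ∧
    (∀ c, 0 < phat c → (Amat γ).mulVec phat c + γ c / Γ = q c) ∧
    (∀ p' : Fin n → ℝ, (∀ c, 0 ≤ p' c) → Monotone p' →
      (∀ c, (Amat γ).mulVec p' c + γ c / Γ ≤ q c) →
      (∀ c, 0 < p' c → (Amat γ).mulVec p' c + γ c / Γ = q c) →
      p' = phat) := by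
  have hr : Antitone (q / γ) := fun i j hij => by
    simpa only [Pi.div_apply, inv_div] using inv_anti₀ (div_pos (hγ i) (hq i)) (hratio i j hij)
  refine ⟨demand_add_equilibriumCutoff_le hγ hr, fun c hc => ?_,
    fun _ => eq_equilibriumCutoff hγ hr⟩
  exact demand_add_equilibriumCutoff_eq hγ hr ((lt_max_iff.1 hc).resolve_left (lt_irrefl 0))
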